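/- Consider an undamped oscillator with mass m and piecewise-constant stiffness following the switched-stiffness logic: stiffness k_h during a quarter cycle from a zero crossing to the next extremal point, then stiffness k_l (with 0 < k_l < k_h) until the next zero crossing. Starting from a zero crossing with velocity v₀, after one full half cycle (one high-stiffness and one low-stiffness quarter cycle with a stiffness drop at the extremal point) the vibration energy is reduced by the factor k_l/k_h; equivalently, the relative energy change per half cycle is ΔE/E = k_l/k_h − 1. -/
import Mathlib

/-- Switched-stiffness half cycle: starting at a zero crossing with velocity v₀
and stiffness k_h, the amplitude is A = v₀√(m/k_h); after the stiffness drop to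
k_l at the extremal point, the energy (1/2)k_l A² equals (k_l/k_h) times the
initial energy E₀ = (1/2)m v₀², and ΔE/E₀ = k_l/k_h − 1. -/
theorem switched_stiffness_half_cycle_energy (m kl kh v₀ : ℝ)
    (hm : 0 < m) (hl : 0 < kl) (hlh : kl < kh) (hv : v₀ ≠ 0) :
    let E₀ := (1 / 2) * m * v₀ ^ 2
    let A := v₀ * Real.sqrt (m / kh)
    let E₁ := (1 / 2) * kl * A ^ 2
    E₁ = (kl / kh) * E₀ ∧ (E₁ - E₀) / E₀ = kl / kh - 1 := by
  intro E₀ A E₁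
  have hkh : 0 < kh := hl.trans hlh
  have hA2 : A ^ 2 = v₀ ^ 2 * (m / kh) := by
    simp only [A, mul_pow, Real.sq_sqrt (by positivity : (0:ℝ) ≤ m / kh)]
  have h1 : E₁ = (kl / kh) * E₀ := by
    simp only [E₁, E₀, hA2]; field_simp
  refine ⟨h1, ?_⟩
  have hE₀ : E₀ ≠ 0 := by simp only [E₀]; positivity
  rw [h1]; field_simp
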